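/- arXiv:2001.03660 — 2 statements merged into one kernel-verified Lean document; each statement's English description precedes it below -/
import Mathlib

section
/- Let d ≥ 1 and let a and M be real symmetric positive semidefinite d×d matrices. Then d · (det a · det M)^{1/d} ≤ trace(a M). (Note det a · det M = det(aM) ≥ 0, so the d-th root is that of a nonnegative real number.) -/
open Finset in
lemma trace_eq_sum_eigenvalues' {d : ℕ} {B : Matrix (Fin d) (Fin d) ℝ}
    (hB : B.IsHermitian) : B.trace = ∑ i, hB.eigenvalues i := by
  rw [hB.trace_eq_sum_eigenvalues]
  simp

/-- The inequality between arithmetic and geometric means of the eigenvalues of a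
product of positive semidefinite matrices:
`d (det a · det M)^{1/d} ≤ trace (a M)`. -/
theorem det_rpow_le_trace_mul (d : ℕ) (hd : 1 ≤ d) (a M : Matrix (Fin d) (Fin d) ℝ)
    (ha : a.PosSemidef) (hM : M.PosSemidef) :
    (d : ℝ) * (a.det * M.det) ^ ((d : ℝ)⁻¹) ≤ (a * M).trace := by
  set s := (open scoped MatrixOrder in CFC.sqrt M) with hs_def
  have hs : s.PosSemidef := by open scoped MatrixOrder in exact Matrix.nonneg_iff_posSemidef.mp (CFC.sqrt_nonneg M)
  have hss : s * s = M := by open scoped MatrixOrder in exact CFC.sqrt_mul_sqrt_self M hM.nonneg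
  have hB : (s * a * s).PosSemidef := by
    have := ha.mul_mul_conjTranspose_same s
    rwa [hs.isHermitian.eq] at this
  have htr : (s * a * s).trace = (a * M).trace := by
    rw [Matrix.trace_mul_cycle, hss, Matrix.trace_mul_comm]
  have hdet : (s * a * s).det = a.det * M.det := by
    rw [Matrix.det_mul, Matrix.det_mul, ← hss, Matrix.det_mul]
    ring
  set lam := hB.1.eigenvalues with hlam
  have hnn : ∀ i, 0 ≤ lam i := hB.eigenvalues_nonneg
  have hdet' : a.det * M.det = ∏ i, lam i := by
    rw [← hdet]
    have := hB.1.det_eq_prod_eigenvalues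
    simpa using this
  have htr' : (a * M).trace = ∑ i, lam i := by
    rw [← htr]; exact trace_eq_sum_eigenvalues' hB.1
  rw [hdet', htr']
  have hd0 : (0:ℝ) < d := by exact_mod_cast hd
  have key := Real.geom_mean_le_arith_mean_weighted Finset.univ
    (fun _ => (d : ℝ)⁻¹) lam (fun i _ => by positivity)
    (by simp [Finset.card_univ]; field_simp) (fun i _ => hnn i)
  have hprod : (∏ i, lam i) ^ ((d:ℝ)⁻¹) = ∏ i, (lam i) ^ ((d:ℝ)⁻¹) := by
    rw [← Real.finset_prod_rpow _ _ (fun i _ => hnn i)]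
  rw [hprod]
  calc (d:ℝ) * ∏ i, (lam i) ^ ((d:ℝ)⁻¹) ≤ (d:ℝ) * ∑ i, (d:ℝ)⁻¹ * lam i := by
        exact mul_le_mul_of_nonneg_left key (le_of_lt hd0)
    _ = ∑ i, lam i := by
        rw [← Finset.mul_sum, ← mul_assoc, mul_inv_cancel₀ (ne_of_gt hd0), one_mul]
end

section
/- Let d ≥ 1 and define p : ℝ^d → ℝ by p(x) = cosh |x|. Then for every x ∈ ℝ^d with x ≠ 0, p is twice differentiable at x and for every symmetric positive semidefinite d×d real matrix a = (a^{rs}) one has ∑_{r,s} a^{rs} D_{rs} p(x) − p(x) · trace(a) ≤ 0, i.e., ∑_{r,s} a^{rs} D_{rs} p(x) ≤ cosh(|x|) · trace(a). -/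
open Metric

/-- Second partial derivative `D_{rs} g` in the directions of the standard basis. -/
noncomputable def D2 {d : ℕ} (g : EuclideanSpace ℝ (Fin d) → ℝ) (r s : Fin d)
    (x : EuclideanSpace ℝ (Fin d)) : ℝ :=
  fderiv ℝ (fun w => fderiv ℝ g w (EuclideanSpace.single s 1)) x (EuclideanSpace.single r 1)

section Aux

variable {d : ℕ}

lemma aux_sinh_le_mul_cosh {u : ℝ} (hu : 0 ≤ u) : Real.sinh u ≤ u * Real.cosh u := by
  have key : ∀ v : ℝ, HasDerivAt (fun t => t * Real.cosh t - Real.sinh t)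
      (v * Real.sinh v) v := by
    intro v
    have h := ((hasDerivAt_id v).fun_mul (Real.hasDerivAt_cosh v)).fun_sub (Real.hasDerivAt_sinh v)
    simpa using h
  have hmono : MonotoneOn (fun t => t * Real.cosh t - Real.sinh t) (Set.Ici (0:ℝ)) := by
    apply monotoneOn_of_deriv_nonneg (convex_Ici 0)
    · exact (Continuous.sub (continuous_id.mul Real.continuous_cosh)
        Real.continuous_sinh).continuousOn
    · intro t ht
      exact (key t).differentiableAt.differentiableWithinAt
    · intro t ht
      rw [(key t).deriv]
      have ht' : (0:ℝ) ≤ t := le_of_lt (by simpa using ht)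
      exact mul_nonneg ht' (Real.sinh_nonneg_iff.mpr ht')
  have := hmono (Set.self_mem_Ici) (Set.mem_Ici.mpr hu) hu
  simpa using this

lemma aux_hasFDerivAt_cosh_norm (w : EuclideanSpace ℝ (Fin d)) (hw : w ≠ 0) :
    HasFDerivAt (fun y : EuclideanSpace ℝ (Fin d) => Real.cosh ‖y‖)
      ((Real.sinh ‖w‖ / ‖w‖) • (innerSL ℝ w)) w := by
  have hw' : (0:ℝ) < ‖w‖ := norm_pos_iff.mpr hw
  have hsq : ‖w‖ ^ 2 ≠ 0 := pow_ne_zero 2 hw'.ne'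
  have h1 : HasFDerivAt (fun y : EuclideanSpace ℝ (Fin d) => ‖y‖ ^ 2)
      (2 • innerSL ℝ w) w := (hasStrictFDerivAt_norm_sq w).hasFDerivAt
  have h2 : HasDerivAt Real.sqrt (1 / (2 * Real.sqrt (‖w‖ ^ 2))) (‖w‖ ^ 2) :=
    Real.hasDerivAt_sqrt hsq
  have h3 : HasDerivAt Real.cosh (Real.sinh (Real.sqrt (‖w‖ ^ 2))) (Real.sqrt (‖w‖ ^ 2)) :=
    Real.hasDerivAt_cosh _
  have h4 := (h3.comp _ h2).comp_hasFDerivAt w h1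
  rw [show ((Real.cosh ∘ Real.sqrt) ∘ fun y : EuclideanSpace ℝ (Fin d) => ‖y‖ ^ 2)
      = fun y => Real.cosh ‖y‖ from funext fun y => by
        simp [Function.comp, Real.sqrt_sq (norm_nonneg y)]] at h4
  refine h4.congr_fderiv ?_
  rw [Real.sqrt_sq hw'.le]
  ext v
  simp only [ContinuousLinearMap.smul_apply, smul_eq_mul]
  field_simp
  ring

lemma aux_fderiv_cosh_norm_apply (w : EuclideanSpace ℝ (Fin d)) (hw : w ≠ 0) (s : Fin d) :
    fderiv ℝ (fun y : EuclideanSpace ℝ (Fin d) => Real.cosh ‖y‖) w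
      (EuclideanSpace.single s 1) = Real.sinh ‖w‖ / ‖w‖ * w s := by
  rw [(aux_hasFDerivAt_cosh_norm w hw).fderiv]
  simp [EuclideanSpace.inner_single_right, mul_comm]

lemma aux_D2_cosh_norm (x : EuclideanSpace ℝ (Fin d)) (hx : x ≠ 0) (r s : Fin d) :
    D2 (fun y : EuclideanSpace ℝ (Fin d) => Real.cosh ‖y‖) r s x =
      Real.sinh ‖x‖ / ‖x‖ * (if s = r then 1 else 0)
      + (Real.cosh ‖x‖ - Real.sinh ‖x‖ / ‖x‖) / ‖x‖ ^ 2 * (x r * x s) := by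
  have hu : (0:ℝ) < ‖x‖ := norm_pos_iff.mpr hx
  have ht0 : ‖x‖ ^ 2 ≠ 0 := pow_ne_zero 2 hu.ne'
  have hsqrt : Real.sqrt (‖x‖ ^ 2) = ‖x‖ := Real.sqrt_sq hu.le
  have hev : (fun w => fderiv ℝ (fun y : EuclideanSpace ℝ (Fin d) => Real.cosh ‖y‖) w
      (EuclideanSpace.single s 1))
      =ᶠ[nhds x] (fun w => Real.sinh (Real.sqrt (‖w‖ ^ 2)) / Real.sqrt (‖w‖ ^ 2) * w s) := by
    filter_upwards [isOpen_ne.mem_nhds hx] with w hw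
    rw [aux_fderiv_cosh_norm_apply w hw s, Real.sqrt_sq (norm_nonneg w)]
  have hs1 : HasDerivAt (fun t => Real.sinh (Real.sqrt t))
      (Real.cosh (Real.sqrt (‖x‖ ^ 2)) * (1 / (2 * Real.sqrt (‖x‖ ^ 2)))) (‖x‖ ^ 2) :=
    (Real.hasDerivAt_sinh _).comp _ (Real.hasDerivAt_sqrt ht0)
  have hsqne : Real.sqrt (‖x‖ ^ 2) ≠ 0 := by rw [hsqrt]; exact hu.ne'
  have hG : HasDerivAt (fun t => Real.sinh (Real.sqrt t) / Real.sqrt t)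
      ((Real.cosh (Real.sqrt (‖x‖ ^ 2)) * (1 / (2 * Real.sqrt (‖x‖ ^ 2))) * Real.sqrt (‖x‖ ^ 2)
        - Real.sinh (Real.sqrt (‖x‖ ^ 2)) * (1 / (2 * Real.sqrt (‖x‖ ^ 2))))
        / Real.sqrt (‖x‖ ^ 2) ^ 2) (‖x‖ ^ 2) :=
    hs1.div (Real.hasDerivAt_sqrt ht0) hsqne
  have hq : HasFDerivAt (fun y : EuclideanSpace ℝ (Fin d) => ‖y‖ ^ 2)
      (2 • innerSL ℝ x) x := (hasStrictFDerivAt_norm_sq x).hasFDerivAt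
  have hGq := hG.comp_hasFDerivAt x hq
  have hproj : HasFDerivAt (fun w : EuclideanSpace ℝ (Fin d) => w s)
      (EuclideanSpace.proj s : EuclideanSpace ℝ (Fin d) →L[ℝ] ℝ) x :=
    by simpa using (EuclideanSpace.proj s : EuclideanSpace ℝ (Fin d) →L[ℝ] ℝ).hasFDerivAt (x := x)
  have hF := hGq.fun_mul hproj
  simp only [Function.comp_def] at hF
  rw [D2, hev.fderiv_eq, hF.fderiv]
  simp only [ContinuousLinearMap.add_apply, ContinuousLinearMap.smul_apply,
    ContinuousLinearMap.coe_smul', Pi.smul_apply, smul_eq_mul, innerSL_apply_apply,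
    EuclideanSpace.single_apply, hsqrt]
  rw [real_inner_comm, EuclideanSpace.inner_single_left]
  simp only [map_one, one_mul, RCLike.conj_to_real]
  by_cases hrs : s = r <;> simp [hrs] <;> field_simp <;> ring

lemma aux_norm_sq_eq (x : EuclideanSpace ℝ (Fin d)) : ‖x‖ ^ 2 = ∑ i, x i ^ 2 := by
  rw [EuclideanSpace.norm_eq, Real.sq_sqrt (Finset.sum_nonneg fun i _ => sq_nonneg _)]
  simp [Real.norm_eq_abs, sq_abs]

open scoped MatrixOrder in
lemma aux_quad_bound (a : Matrix (Fin d) (Fin d) ℝ) (ha : a.PosSemidef)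
    (x : EuclideanSpace ℝ (Fin d)) :
    0 ≤ a.trace ∧ ∑ r, ∑ s, a r s * (x r * x s) ≤ ‖x‖ ^ 2 * a.trace := by
  obtain ⟨B, hB⟩ := CStarAlgebra.nonneg_iff_eq_star_mul_self.mp ha.nonneg
  obtain rfl : a = B.conjTranspose * B := hB
  have hentry : ∀ r s, (B.conjTranspose * B) r s = ∑ k, B k r * B k s := by
    intro r s
    simp [Matrix.mul_apply, Matrix.conjTranspose_apply]
  have htrace : (B.conjTranspose * B).trace = ∑ k, ∑ r, B k r ^ 2 := by
    rw [Matrix.trace]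
    simp only [Matrix.diag_apply, hentry]
    rw [Finset.sum_comm]
    simp [sq]
  have hQ : ∑ r, ∑ s, (B.conjTranspose * B) r s * (x r * x s)
      = ∑ k, (∑ r, B k r * x r) * (∑ s, B k s * x s) := by
    have step : ∀ r, ∑ s, (∑ k, B k r * B k s) * (x r * x s)
        = ∑ k, ∑ s, (B k r * x r) * (B k s * x s) := by
      intro r
      simp_rw [Finset.sum_mul]
      rw [Finset.sum_comm]
      exact Finset.sum_congr rfl fun k _ => Finset.sum_congr rfl fun s _ => by ring
    simp_rw [hentry]
    calc ∑ r, ∑ s, (∑ k, B k r * B k s) * (x r * x s)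
        = ∑ r, ∑ k, ∑ s, (B k r * x r) * (B k s * x s) :=
          Finset.sum_congr rfl fun r _ => step r
      _ = ∑ k, ∑ r, ∑ s, (B k r * x r) * (B k s * x s) := Finset.sum_comm
      _ = ∑ k, (∑ r, B k r * x r) * (∑ s, B k s * x s) :=
          Finset.sum_congr rfl fun k _ => (Finset.sum_mul_sum _ _ _ _).symm
  constructor
  · rw [htrace]
    exact Finset.sum_nonneg fun k _ => Finset.sum_nonneg fun r _ => sq_nonneg _
  · rw [hQ, htrace, aux_norm_sq_eq, Finset.mul_sum]
    refine Finset.sum_le_sum fun k _ => ?_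
    have := Finset.sum_mul_sq_le_sq_mul_sq Finset.univ (B k) (fun i => x i)
    calc (∑ r, B k r * x r) * (∑ s, B k s * x s)
        = (∑ r, B k r * x r) ^ 2 := by rw [sq]
      _ ≤ (∑ r, B k r ^ 2) * ∑ r, x r ^ 2 := this
      _ = (∑ i, x i ^ 2) * ∑ r, B k r ^ 2 := by ring

end Aux

/-- The function `p(x) = cosh |x|` is twice differentiable away from the origin and
satisfies `a^{rs} D_{rs} p(x) ≤ cosh |x| · tr a` for every symmetric positive
semidefinite matrix `a`. -/
theorem cosh_norm_second_derivative_bound (d : ℕ) (hd : 1 ≤ d)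
    (x : EuclideanSpace ℝ (Fin d)) (hx : x ≠ 0) :
    ContDiffAt ℝ 2 (fun y : EuclideanSpace ℝ (Fin d) => Real.cosh ‖y‖) x ∧
    ∀ a : Matrix (Fin d) (Fin d) ℝ, a.PosSemidef →
      ∑ r, ∑ s, a r s * D2 (fun y : EuclideanSpace ℝ (Fin d) => Real.cosh ‖y‖) r s x ≤
        Real.cosh ‖x‖ * a.trace := by
  have hu : (0:ℝ) < ‖x‖ := norm_pos_iff.mpr hx
  constructor
  · exact Real.contDiff_cosh.contDiffAt.comp x (contDiffAt_norm ℝ hx)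
  · intro a ha
    obtain ⟨htr, hQ⟩ := aux_quad_bound a ha x
    set u := ‖x‖ with hu_def
    set t := a.trace with ht_def
    set c1 := (Real.cosh u - Real.sinh u / u) / u ^ 2 with hc1_def
    have hsum : ∑ r, ∑ s, a r s *
        D2 (fun y : EuclideanSpace ℝ (Fin d) => Real.cosh ‖y‖) r s x
        = Real.sinh u / u * t + c1 * ∑ r, ∑ s, a r s * (x r * x s) := by
      simp_rw [aux_D2_cosh_norm x hx, mul_add, Finset.sum_add_distrib]
      congr 1
      · rw [show t = ∑ r, a r r from by simp [ht_def, Matrix.trace, Matrix.diag]]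
        rw [Finset.mul_sum]
        refine Finset.sum_congr rfl fun r _ => ?_
        rw [Finset.sum_eq_single r (fun s _ hs => by simp [hs]) (by simp)]
        simp [mul_comm, ← hu_def]
      · rw [Finset.mul_sum]
        refine Finset.sum_congr rfl fun r _ => ?_
        rw [Finset.mul_sum]
        exact Finset.sum_congr rfl fun s _ => by ring
    rw [hsum]
    have hsinh : Real.sinh u ≤ u * Real.cosh u := aux_sinh_le_mul_cosh hu.le
    have hc1 : 0 ≤ c1 := by
      apply div_nonneg _ (sq_nonneg u)
      rw [sub_nonneg, div_le_iff₀ hu]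
      linarith [hsinh]
    have h1 : c1 * ∑ r, ∑ s, a r s * (x r * x s) ≤ c1 * (u ^ 2 * t) :=
      mul_le_mul_of_nonneg_left hQ hc1
    have h2 : c1 * (u ^ 2 * t) = (Real.cosh u - Real.sinh u / u) * t := by
      rw [hc1_def]; field_simp
    have h3 : Real.sinh u / u * t + (Real.cosh u - Real.sinh u / u) * t
        = Real.cosh u * t := by ring
    linarith
end
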